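/- For a connected simple graph G, every vertex v_i satisfies RE_G(v_i) ≤ 3/8 + (3/4)(R^2)_{ii} − (1/8)(R^4)_{ii}, where R = R(G) is the Randić matrix. -/

import Mathlib

open Matrix BigOperators Finset
open scoped Classical

/-- `M * Mᴴ` is positive semidefinite. -/
theorem mulConjTranspose_posSemidef {V : Type*} [Fintype V] [DecidableEq V]
    (M : Matrix V V ℝ) : (M * Mᴴ).PosSemidef := by
  simpa using Matrix.posSemidef_conjTranspose_mul_self Mᴴ

/-- The absolute value `|M| = (M M*)^(1/2)` of a matrix. -/
noncomputable def matAbs {V : Type*} [Fintype V] [DecidableEq V]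
    (M : Matrix V V ℝ) : Matrix V V ℝ :=
  (mulConjTranspose_posSemidef M).1.eigenvectorUnitary.1 *
    diagonal ((↑) ∘ Real.sqrt ∘ (mulConjTranspose_posSemidef M).1.eigenvalues) *
    (star (mulConjTranspose_posSemidef M).1.eigenvectorUnitary : Matrix V V ℝ)

/-- The Randić matrix of a simple graph. -/
noncomputable def randicMatrix {V : Type*} [Fintype V] [DecidableEq V]
    (G : SimpleGraph V) : Matrix V V ℝ :=
  Matrix.of fun i j =>
    if G.Adj i j then 1 / Real.sqrt ((G.degree i : ℝ) * (G.degree j : ℝ)) else 0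

/-- The Randić energy of a vertex: `RE_G(v) = |R(G)|_{vv}`. -/
noncomputable def vertexRE {V : Type*} [Fintype V] [DecidableEq V]
    (G : SimpleGraph V) (i : V) : ℝ :=
  matAbs (randicMatrix G) i i

lemma matAbs_posSemidef {V : Type*} [Fintype V] [DecidableEq V] (M : Matrix V V ℝ) :
    (matAbs M).PosSemidef := by
  unfold matAbs
  have hD : (diagonal ((↑) ∘ Real.sqrt ∘ (mulConjTranspose_posSemidef M).1.eigenvalues) :
      Matrix V V ℝ).PosSemidef := by
    rw [posSemidef_diagonal_iff]
    intro j
    simp only [Function.comp_apply]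
    exact Real.sqrt_nonneg _
  have := hD.mul_mul_conjTranspose_same
    ((mulConjTranspose_posSemidef M).1.eigenvectorUnitary.1)
  simpa [Matrix.star_eq_conjTranspose] using this

lemma matAbs_mul_self {V : Type*} [Fintype V] [DecidableEq V] (M : Matrix V V ℝ) :
    matAbs M * matAbs M = M * Mᴴ := by
  have hP := mulConjTranspose_posSemidef M
  have hspec := hP.1.spectral_theorem
  unfold matAbs
  set U := (mulConjTranspose_posSemidef M).1.eigenvectorUnitary
  have hU : (star U : Matrix V V ℝ) * (U : Matrix V V ℝ) = 1 := Unitary.coe_star_mul_self U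
  have hDD : diagonal ((↑) ∘ Real.sqrt ∘ (mulConjTranspose_posSemidef M).1.eigenvalues) *
      diagonal ((↑) ∘ Real.sqrt ∘ (mulConjTranspose_posSemidef M).1.eigenvalues)
      = (diagonal (RCLike.ofReal ∘ (mulConjTranspose_posSemidef M).1.eigenvalues) :
          Matrix V V ℝ) := by
    rw [diagonal_mul_diagonal]
    congr 1
    funext j
    simp only [Function.comp_apply]
    exact Real.mul_self_sqrt (hP.eigenvalues_nonneg j)
  calc (U : Matrix V V ℝ) *
        diagonal ((↑) ∘ Real.sqrt ∘ (mulConjTranspose_posSemidef M).1.eigenvalues) *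
        (star U : Matrix V V ℝ) *
        ((U : Matrix V V ℝ) *
        diagonal ((↑) ∘ Real.sqrt ∘ (mulConjTranspose_posSemidef M).1.eigenvalues) *
        (star U : Matrix V V ℝ))
      = (U : Matrix V V ℝ) *
        (diagonal ((↑) ∘ Real.sqrt ∘ (mulConjTranspose_posSemidef M).1.eigenvalues) *
        ((star U : Matrix V V ℝ) * (U : Matrix V V ℝ)) *
        diagonal ((↑) ∘ Real.sqrt ∘ (mulConjTranspose_posSemidef M).1.eigenvalues)) *
        (star U : Matrix V V ℝ) := by simp only [Matrix.mul_assoc]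
    _ = M * Mᴴ := by
        rw [hU, Matrix.mul_one, hDD]
        exact hspec.symm

lemma randic_symm {V : Type*} [Fintype V] [DecidableEq V] (G : SimpleGraph V) :
    (randicMatrix G)ᵀ = randicMatrix G := by
  ext i j
  simp only [randicMatrix, transpose_apply, of_apply]
  rw [if_congr (G.adj_comm j i) rfl rfl, mul_comm]

lemma randic_isHermitian {V : Type*} [Fintype V] [DecidableEq V] (G : SimpleGraph V) :
    (randicMatrix G).IsHermitian := by
  rw [Matrix.IsHermitian, Matrix.conjTranspose_eq_transpose_of_trivial, randic_symm]

lemma randic_psd {V : Type*} [Fintype V] [DecidableEq V] (G : SimpleGraph V)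
    (ε : ℝ) (hε : ε ^ 2 = 1) :
    ((1 : Matrix V V ℝ) + ε • randicMatrix G).PosSemidef := by
  refine Matrix.PosSemidef.of_dotProduct_mulVec_nonneg ?_ ?_
  · simp [Matrix.IsHermitian, conjTranspose_add, conjTranspose_smul, randic_symm]
  · intro x
    set d : V → ℝ := fun i => (G.degree i : ℝ) with hd
    have hdpos : ∀ {i j : V}, G.Adj i j → 0 < d i := by
      intro i j h
      have : 0 < G.degree i := G.degree_pos_iff_exists_adj i |>.mpr ⟨j, h⟩
      simp only [hd]
      exact_mod_cast this
    set Q : ℝ := ∑ i, ∑ j, x i * (randicMatrix G i j * x j) with hQ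
    have hexp : star x ⬝ᵥ ((1 + ε • randicMatrix G) *ᵥ x) = (∑ i, x i * x i) + ε * Q := by
      simp only [star_trivial, dotProduct, mulVec, Finset.mul_sum, hQ]
      rw [← Finset.sum_add_distrib]
      refine Finset.sum_congr rfl fun i _ => ?_
      have hdiag : x i * x i = ∑ j, (if i = j then x i * x j else 0) := by
        rw [Finset.sum_ite_eq]; simp
      rw [hdiag, ← Finset.sum_add_distrib]
      refine Finset.sum_congr rfl fun j _ => ?_
      simp only [Matrix.add_apply, one_apply, Matrix.smul_apply, smul_eq_mul]
      split_ifs <;> ring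
    rw [hexp]
    set A : ℝ := ∑ i, ∑ j, (if G.Adj i j then x i ^ 2 / d i else 0) with hA
    set A' : ℝ := ∑ i, ∑ j, (if G.Adj i j then x j ^ 2 / d j else 0) with hA'def
    set F : ℝ := ∑ i, ∑ j,
        (if G.Adj i j then (x i / Real.sqrt (d i) + ε * (x j / Real.sqrt (d j))) ^ 2 / 2 else 0)
      with hF
    have hF0 : 0 ≤ F := by
      refine Finset.sum_nonneg fun i _ => Finset.sum_nonneg fun j _ => ?_
      split <;> positivity
    have hA' : A' = A := by
      rw [hA'def, Finset.sum_comm, hA]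
      exact Finset.sum_congr rfl fun i _ => Finset.sum_congr rfl fun j _ =>
        if_congr (G.adj_comm j i) rfl rfl
    have hFA : F = A / 2 + A' / 2 + ε * Q := by
      rw [hF, hQ, hA, hA'def]
      simp_rw [Finset.sum_div, Finset.mul_sum, ← Finset.sum_add_distrib]
      refine Finset.sum_congr rfl fun i _ => ?_
      refine Finset.sum_congr rfl fun j _ => ?_
      by_cases h : G.Adj i j
      · simp only [h, if_true, randicMatrix, of_apply]
        have hdi := hdpos h
        have hdj := hdpos h.symm
        have hmul : Real.sqrt (d i * d j) = Real.sqrt (d i) * Real.sqrt (d j) :=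
          Real.sqrt_mul hdi.le _
        rw [hmul]
        set si := Real.sqrt (d i) with hsidef
        set sj := Real.sqrt (d j) with hsjdef
        have hsi : si ^ 2 = d i := Real.sq_sqrt hdi.le
        have hsj : sj ^ 2 = d j := Real.sq_sqrt hdj.le
        have hsi0 : si ≠ 0 := by rw [hsidef]; positivity
        have hsj0 : sj ≠ 0 := by rw [hsjdef]; positivity
        rw [← hsi, ← hsj]
        have hsq : (x i / si + ε * (x j / sj)) ^ 2
            = (x i / si) ^ 2 + (x j / sj) ^ 2 + 2 * ε * ((x i / si) * (x j / sj)) := by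
          have : (x i / si + ε * (x j / sj)) ^ 2
              = (x i / si) ^ 2 + ε ^ 2 * (x j / sj) ^ 2 + 2 * ε * ((x i / si) * (x j / sj)) := by
            ring
          rw [this, hε, one_mul]
        rw [hsq]
        field_simp
      · simp [h, randicMatrix]
    have hA2 : A ≤ ∑ i, x i * x i := by
      rw [hA]
      refine Finset.sum_le_sum fun i _ => ?_
      have hconst : (∑ j, (if G.Adj i j then x i ^ 2 / d i else 0)) = d i * (x i ^ 2 / d i) := by
        rw [← Finset.sum_filter, Finset.sum_const, nsmul_eq_mul]
        congr 1
        simp only [hd]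
        norm_cast
        simp [SimpleGraph.degree, SimpleGraph.neighborFinset_eq_filter]
      rw [hconst]
      rcases eq_or_ne (d i) 0 with h0 | h0
      · rw [h0, zero_mul]; exact mul_self_nonneg _
      · rw [mul_div_cancel₀ _ h0, sq]
    linarith [hF0, hFA, hA', hA2]

/-- RE_G(v_i) ≤ 3/8 + (3/4)(R²)_{ii} − (1/8)(R⁴)_{ii}. -/
theorem randic_vertex_energy_le_three_terms {n : ℕ} (G : SimpleGraph (Fin n))
    (hG : G.Connected) (i : Fin n) :
    vertexRE G i ≤
      3 / 8 + (3 / 4) * (((randicMatrix G) ^ 2) i i) - (1 / 8) * (((randicMatrix G) ^ 4) i i) := by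

  set R := randicMatrix G with hRdef
  have hR : Rᴴ = R := (randic_isHermitian G).eq
  have hP : ((1 : Matrix (Fin n) (Fin n) ℝ) + R).PosSemidef := by
    simpa using randic_psd G 1 (by norm_num)
  have hM : ((1 : Matrix (Fin n) (Fin n) ℝ) - R).PosSemidef := by
    have := randic_psd G (-1) (by norm_num)
    simpa [sub_eq_add_neg] using this
  have h1p : ((1 : Matrix (Fin n) (Fin n) ℝ) + R)ᴴ = 1 + R := hP.1
  have h1m : ((1 : Matrix (Fin n) (Fin n) ℝ) - R)ᴴ = 1 - R := hM.1
  -- 1 - R^2 is PSD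
  have h2 : ((1 : Matrix (Fin n) (Fin n) ℝ) - R ^ 2).PosSemidef := by
    have t1 := hM.conjTranspose_mul_mul_same (1 + R)
    have t2 := hP.conjTranspose_mul_mul_same (1 - R)
    rw [h1p] at t1
    rw [h1m] at t2
    have tsum := t1.add t2
    have hident : (1 + R) * (1 - R) * (1 + R) + (1 - R) * (1 + R) * (1 - R)
        = (1 - R ^ 2) + (1 - R ^ 2) := by noncomm_ring
    rw [hident] at tsum
    refine Matrix.PosSemidef.of_dotProduct_mulVec_nonneg ?_ ?_
    · rw [Matrix.IsHermitian, conjTranspose_sub, conjTranspose_one, conjTranspose_pow, hR]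
    · intro x
      have hq := tsum.dotProduct_mulVec_nonneg x
      rw [add_mulVec, dotProduct_add] at hq
      linarith
  -- S part
  set S := matAbs R with hSdef
  have hSpsd : S.PosSemidef := matAbs_posSemidef R
  have hSS : S * S = R * Rᴴ := matAbs_mul_self R
  have hS2 : S ^ 2 = R ^ 2 := by rw [pow_two, hSS, hR, ← pow_two]
  have hS4 : S ^ 4 = R ^ 4 := by
    rw [show (4:ℕ) = 2*2 from rfl, pow_mul, pow_mul, hS2]
  have hSH : Sᴴ = S := hSpsd.1
  have hST : Sᵀ = S := by
    rw [← Matrix.conjTranspose_eq_transpose_of_trivial, hSH]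
  have hIS2 : ((1 : Matrix (Fin n) (Fin n) ℝ) - S ^ 2).PosSemidef := by rw [hS2]; exact h2
  have hx2 : ∀ x : Fin n → ℝ, (S *ᵥ x) ⬝ᵥ (S *ᵥ x) = x ⬝ᵥ (S * S) *ᵥ x := by
    intro x
    rw [← mulVec_mulVec, dotProduct_mulVec, ← mulVec_transpose, hST]
    exact dotProduct_comm _ _
  have hIS : ((1 : Matrix (Fin n) (Fin n) ℝ) - S).PosSemidef := by
    refine Matrix.PosSemidef.of_dotProduct_mulVec_nonneg ?_ ?_
    · rw [Matrix.IsHermitian, conjTranspose_sub, conjTranspose_one, hSH]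
    · intro x
      simp only [star_trivial, sub_mulVec, one_mulVec, dotProduct_sub, sub_nonneg]
      have ht0 : 0 ≤ x ⬝ᵥ S *ᵥ x := by simpa using hSpsd.dotProduct_mulVec_nonneg x
      have hc0 : 0 ≤ x ⬝ᵥ x := by
        refine Finset.sum_nonneg fun k _ => mul_self_nonneg _
      have hcs : (x ⬝ᵥ S *ᵥ x) ^ 2 ≤ (x ⬝ᵥ x) * ((S *ᵥ x) ⬝ᵥ (S *ᵥ x)) := by
        have := Finset.sum_mul_sq_le_sq_mul_sq univ x (S *ᵥ x)
        simpa [dotProduct, sq] using this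
      have hu_le : x ⬝ᵥ (S * S) *ᵥ x ≤ x ⬝ᵥ x := by
        have hq := h2.dotProduct_mulVec_nonneg x
        simp only [star_trivial, sub_mulVec, one_mulVec, dotProduct_sub, sub_nonneg] at hq
        rw [pow_two] at hq
        rw [show S * S = R * R by rw [hSS, hR]]
        exact hq
      rw [hx2 x] at hcs
      nlinarith [hcs, ht0, hc0, hu_le]
  have hISH : ((1 : Matrix (Fin n) (Fin n) ℝ) - S)ᴴ = 1 - S := hIS.1
  have t1 := hIS.conjTranspose_mul_mul_same (1 - S)
  have t2 := hIS2.conjTranspose_mul_mul_same (1 - S)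
  rw [hISH] at t1 t2
  have big := t1.add (t1.add t2)
  have hident2 : (1 - S) * (1 - S) * (1 - S) +
      ((1 - S) * (1 - S) * (1 - S) + (1 - S) * (1 - S ^ 2) * (1 - S))
      = 3 • (1 : Matrix (Fin n) (Fin n) ℝ) - 8 • S + 6 • S ^ 2 - S ^ 4 := by
    noncomm_ring
  rw [hident2] at big
  have hdiag := big.dotProduct_mulVec_nonneg (Pi.single i 1)
  have hentry : star (Pi.single i 1) ⬝ᵥ
      ((3 • (1 : Matrix (Fin n) (Fin n) ℝ) - 8 • S + 6 • S ^ 2 - S ^ 4) *ᵥ Pi.single i 1)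
      = (3 • (1 : Matrix (Fin n) (Fin n) ℝ) - 8 • S + 6 • S ^ 2 - S ^ 4) i i := by
    simp [dotProduct, mulVec, Pi.single_apply, mul_ite, ite_mul, Finset.sum_ite_eq]
  rw [hentry] at hdiag
  simp only [Matrix.sub_apply, Matrix.add_apply, Matrix.smul_apply, Matrix.one_apply_eq] at hdiag
  simp only [nsmul_eq_mul] at hdiag
  push_cast at hdiag
  show S i i ≤ 3 / 8 + 3 / 4 * ((R ^ 2) i i) - 1 / 8 * ((R ^ 4) i i)
  rw [← hS2, ← hS4]
  linarith
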